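/- arXiv:2110.13378 — 2 statements merged into one kernel-verified Lean document; each statement's English description precedes it below -/
import Mathlib

section
/- With υ_∞(y) = log(8/(1+|y|²)²), one has ∫_{ℝ²} (8(|y|²-1)²/(|y|²+1)⁴) · [ (1/2)υ_∞(y)² + υ_∞(y) - ω⁰_∞(y) ] dy = 8π, where ω⁰_∞ is the radial solution of Δω + 8/(1+|y|²)² ω = 8/(1+|y|²)² · (1/2)υ_∞² given by the explicit formula ω⁰_∞(y) = (1/2)υ_∞(y)² + 6 log(|y|²+1) + (2 log 8 - 10)/(|y|²+1) + ((|y|²-1)/(|y|²+1)) [ 4∫_{|y|²}^{∞} log(s+1)/(s(s+1)) ds - 2 log²(|y|²+1) - (1/2) log² 8 ]. -/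
noncomputable section
open MeasureTheory Real

/-- `υ_∞(y) = log(8/(1+|y|²)²)`. -/
def vInf (y : EuclideanSpace ℝ (Fin 2)) : ℝ := Real.log (8 / (1 + ‖y‖ ^ 2) ^ 2)

/-- The explicit radial solution `ω⁰_∞`. -/
def w0Inf (y : EuclideanSpace ℝ (Fin 2)) : ℝ :=
  (1 / 2) * (vInf y) ^ 2 + 6 * Real.log (‖y‖ ^ 2 + 1)
    + (2 * Real.log 8 - 10) / (‖y‖ ^ 2 + 1)
    + (‖y‖ ^ 2 - 1) / (‖y‖ ^ 2 + 1) *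
        (4 * (∫ s in Set.Ioi (‖y‖ ^ 2), Real.log (s + 1) / (s * (s + 1)))
          - 2 * (Real.log (‖y‖ ^ 2 + 1)) ^ 2 - (1 / 2) * (Real.log 8) ^ 2)

/-!
The integrand depends only on `t = ‖y‖²`, so polar coordinates turn the integral into
`π ∫_0^∞ h(t) dt`, where `h` involves `L = log (t + 1)` and the tail
`I(t) = ∫_t^∞ log (s + 1) / (s (s + 1)) ds`. This `h` has an explicit primitive `F`, a combination
of `I`, `L` and rational functions of `t`, with `F(0) = -8` and `F(t) → 0` as `t → ∞`; hence
`∫_0^∞ h = 8`. The improper integral exists because `|h(t)| ≤ C (L² + 1) / (t + 1)²`, and the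
right-hand side has the elementary primitive `-C (L² + 2 L + 3) / (t + 1)`.
-/

open Set Filter Topology

lemma tendsto_log_add_one_pow_div_atTop (n : ℕ) :
    Tendsto (fun t : ℝ => log (t + 1) ^ n / (t + 1)) atTop (𝓝 0) := by
  simpa [Function.comp_def] using (tendsto_pow_log_div_mul_add_atTop 1 0 n one_ne_zero).comp
    (tendsto_atTop_add_const_right atTop 1 tendsto_id)

def logSqWeight (t : ℝ) : ℝ := (log (t + 1) ^ 2 + 1) / (t + 1) ^ 2

lemma integrableOn_logSqWeight : IntegrableOn logSqWeight (Ioi 0) := by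
  let G : ℝ → ℝ := fun t => -(log (t + 1) ^ 2 + 2 * log (t + 1) + 3) / (t + 1)
  have hG_deriv : ∀ t ∈ Ioi (0 : ℝ), HasDerivAt G (logSqWeight t) t := fun t (ht : 0 < t) => by
    have h1 : t + 1 ≠ 0 := by positivity
    have hL : HasDerivAt (fun u => log (u + 1)) (1 / (t + 1)) t := by
      simpa using ((hasDerivAt_id t).add_const 1).log h1
    refine ((((hL.fun_pow 2).fun_add (hL.const_mul 2)).add_const 3).fun_neg.fun_div
      ((hasDerivAt_id' t).add_const 1) h1).congr_deriv ?_
    rw [logSqWeight]; field_simp; ring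
  have hG_lim : Tendsto G atTop (𝓝 0) := by
    have hlim := (((tendsto_log_add_one_pow_div_atTop 2).add
      ((tendsto_log_add_one_pow_div_atTop 1).const_mul 2)).add
      ((tendsto_log_add_one_pow_div_atTop 0).const_mul 3)).neg
    convert hlim using 2 with t
    · simp only [G]; field_simp
    · simp
  have hG_cont : ContinuousWithinAt G (Ici 0) 0 :=
    ContinuousAt.continuousWithinAt (by fun_prop (disch := norm_num))
  exact integrableOn_Ioi_deriv_of_nonneg hG_cont hG_deriv
    (fun t _ => by unfold logSqWeight; positivity) hG_lim

def logKernel (s : ℝ) : ℝ := log (s + 1) / (s * (s + 1))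

lemma logKernel_nonneg {s : ℝ} (hs : 0 ≤ s) : 0 ≤ logKernel s :=
  div_nonneg (log_nonneg (by linarith)) (by positivity)

lemma logKernel_le {s : ℝ} (hs : 0 < s) : logKernel s ≤ 2 * logSqWeight s := by
  have hL0 : 0 ≤ log (s + 1) := log_nonneg (by linarith)
  have hLs : log (s + 1) ≤ s := by linarith [log_le_sub_one_of_pos (by linarith : 0 < s + 1)]
  rw [logKernel, logSqWeight, mul_div_assoc', div_le_div_iff₀ (by positivity) (by positivity)]
  have key : log (s + 1) * (s + 1) ≤ 2 * s * (log (s + 1) ^ 2 + 1) := by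
    rcases le_total s 1 with h | h
    · nlinarith [mul_nonneg hs.le (sq_nonneg (log (s + 1)))]
    · nlinarith [sq_nonneg (log (s + 1) - 1)]
  nlinarith [mul_le_mul_of_nonneg_right key (by positivity : (0:ℝ) ≤ s + 1)]

lemma continuousOn_logKernel : ContinuousOn logKernel (Ioi 0) := by
  intro s (hs : 0 < s)
  apply ContinuousAt.continuousWithinAt
  unfold logKernel
  fun_prop (disch := positivity)

lemma integrableOn_logKernel : IntegrableOn logKernel (Ioi 0) := by
  refine (integrableOn_logSqWeight.const_mul 2).mono'
    (continuousOn_logKernel.aestronglyMeasurable measurableSet_Ioi) ?_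
  filter_upwards [ae_restrict_mem measurableSet_Ioi] with s (hs : 0 < s)
  rw [norm_of_nonneg (logKernel_nonneg hs.le)]
  exact logKernel_le hs

def logKernelTail (t : ℝ) : ℝ := ∫ s in Ioi t, logKernel s

lemma logKernelTail_eq_sub {t : ℝ} (ht : 0 ≤ t) :
    logKernelTail t = logKernelTail 0 - ∫ s in 0..t, logKernel s := by
  rw [intervalIntegral.integral_of_le ht, logKernelTail, logKernelTail,
    ← Ioc_union_Ioi_eq_Ioi ht, setIntegral_union (Ioc_disjoint_Ioi le_rfl) measurableSet_Ioi
      (integrableOn_logKernel.mono_set Ioc_subset_Ioi_self)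
      (integrableOn_logKernel.mono_set (Ioi_subset_Ioi ht))]
  ring

lemma logKernelTail_nonneg {t : ℝ} (ht : 0 ≤ t) : 0 ≤ logKernelTail t :=
  setIntegral_nonneg measurableSet_Ioi fun _ hs => logKernel_nonneg (ht.trans hs.le)

lemma logKernelTail_le {t : ℝ} (ht : 0 ≤ t) : logKernelTail t ≤ logKernelTail 0 := by
  rw [logKernelTail_eq_sub ht, sub_le_self_iff]
  exact intervalIntegral.integral_nonneg ht fun _ hs => logKernel_nonneg hs.1

lemma hasDerivAt_logKernelTail {t : ℝ} (ht : 0 < t) :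
    HasDerivAt logKernelTail (-logKernel t) t := by
  have hprim : HasDerivAt (fun u => ∫ s in 0..u, logKernel s) (logKernel t) t :=
    intervalIntegral.integral_hasDerivAt_right
      ((intervalIntegrable_iff_integrableOn_Ioc_of_le ht.le).2
        (integrableOn_logKernel.mono_set Ioc_subset_Ioi_self))
      (continuousOn_logKernel.stronglyMeasurableAtFilter isOpen_Ioi t ht)
      (continuousOn_logKernel.continuousAt (Ioi_mem_nhds ht))
  refine (hprim.const_sub (logKernelTail 0)).congr_of_eventuallyEq ?_
  filter_upwards [Ioi_mem_nhds ht] with u hu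
  exact logKernelTail_eq_sub (le_of_lt hu)

lemma continuousWithinAt_logKernelTail_zero : ContinuousWithinAt logKernelTail (Ici 0) 0 := by
  have hprim : ContinuousWithinAt (fun u => ∫ s in 0..u, logKernel s) (Icc 0 1) 0 :=
    intervalIntegral.continuousWithinAt_primitive (measure_singleton 0) (by
      simpa using (intervalIntegrable_iff_integrableOn_Ioc_of_le zero_le_one).2
        (integrableOn_logKernel.mono_set Ioc_subset_Ioi_self))
  exact ((continuousWithinAt_const.sub hprim).mono_of_mem_nhdsWithin
    (Icc_mem_nhdsGE zero_lt_one)).congr (fun u hu => logKernelTail_eq_sub hu)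
    (logKernelTail_eq_sub le_rfl)

lemma tendsto_logKernelTail_atTop : Tendsto logKernelTail atTop (𝓝 0) := by
  have hlim := (intervalIntegral_tendsto_integral_Ioi 0 integrableOn_logKernel tendsto_id).const_sub
    (logKernelTail 0)
  change Tendsto _ _ (𝓝 (logKernelTail 0 - logKernelTail 0)) at hlim
  rw [sub_self] at hlim
  refine hlim.congr' ?_
  filter_upwards [eventually_ge_atTop 0] with t ht
  exact (logKernelTail_eq_sub ht).symm

lemma log_eight_mem_Icc : log 8 ∈ Icc (0 : ℝ) 7 :=
  ⟨log_nonneg (by norm_num), by linarith [log_le_sub_one_of_pos (by norm_num : (0:ℝ) < 8)]⟩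

def radialIntegrand (t : ℝ) : ℝ :=
  8 * (t - 1) ^ 2 / (t + 1) ^ 4 *
    (log 8 - 8 * log (t + 1) - (2 * log 8 - 10) / (t + 1)
      - (t - 1) / (t + 1) * (4 * logKernelTail t - 2 * log (t + 1) ^ 2 - (1 / 2) * log 8 ^ 2))

/-- With `u = (t - 1) / (t + 1)`, so that `u' = 2 / (t + 1)²`, the coefficient
`-32 (t - 1)³ / (t + 1)⁵ = -16 u³ u'` of `logKernelTail` in `radialIntegrand` has the primitive
`4 (1 - u⁴) = 32 t (t² + 1) / (t + 1)⁴`, chosen to vanish at `t = 0`. -/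
def radialPrimitive (t : ℝ) : ℝ :=
  8 * t * (t ^ 2 + 1) / (t + 1) ^ 4
      * (4 * logKernelTail t - 2 * log (t + 1) ^ 2 - log 8 - log 8 ^ 2 / 2)
    + 32 * t * (t - 1) / (t + 1) ^ 3 * log (t + 1)
    + 8 * (4 * t ^ 3 + t ^ 2 + 6 * t - 1) / (t + 1) ^ 4

lemma hasDerivAt_radialPrimitive {t : ℝ} (ht : 0 < t) :
    HasDerivAt radialPrimitive (radialIntegrand t) t := by
  have h1 : t + 1 ≠ 0 := by positivity
  have hx := hasDerivAt_id' t
  have hs := hx.add_const 1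
  have hL : HasDerivAt (fun u => log (u + 1)) (1 / (t + 1)) t := by
    simpa using hs.log h1
  have hA := ((hx.const_mul 8).fun_mul ((hx.fun_pow 2).add_const 1)).fun_div (hs.fun_pow 4)
    (pow_ne_zero 4 h1)
  have hB := ((((hasDerivAt_logKernelTail ht).const_mul 4).fun_sub
    ((hL.fun_pow 2).const_mul 2)).sub_const (log 8)).sub_const (log 8 ^ 2 / 2)
  have hC := (((hx.const_mul 32).fun_mul (hx.sub_const 1)).fun_div (hs.fun_pow 3)
    (pow_ne_zero 3 h1)).fun_mul hL
  have hD := ((((((hx.fun_pow 3).const_mul 4).fun_add (hx.fun_pow 2)).fun_add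
    (hx.const_mul 6)).sub_const 1).const_mul 8).fun_div (hs.fun_pow 4) (pow_ne_zero 4 h1)
  refine ((hA.fun_mul hB).fun_add hC |>.fun_add hD).congr_deriv ?_
  simp only [radialIntegrand, logKernel]
  field_simp
  ring

lemma radialPrimitive_zero : radialPrimitive 0 = -8 := by
  norm_num [radialPrimitive]

lemma continuousWithinAt_radialPrimitive_zero :
    ContinuousWithinAt radialPrimitive (Ici 0) 0 := by
  have := continuousWithinAt_logKernelTail_zero
  unfold radialPrimitive
  fun_prop (disch := norm_num)

lemma abs_radialPrimitive_le {t : ℝ} (ht : 0 ≤ t) :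
    |radialPrimitive t| ≤
      (8 * (4 * logKernelTail 0 + log 8 + log 8 ^ 2 / 2) + 48 + 32 * log (t + 1)
        + 16 * log (t + 1) ^ 2) / (t + 1) := by
  obtain ⟨hc0, hc7⟩ := log_eight_mem_Icc
  have ht1 : 0 < t + 1 := by linarith
  have hL : 0 ≤ log (t + 1) := log_nonneg (by linarith)
  have hI0 := logKernelTail_nonneg ht
  have hIK := logKernelTail_le ht
  have hA : |8 * t * (t ^ 2 + 1) / (t + 1) ^ 4| ≤ 8 / (t + 1) := by
    rw [abs_of_nonneg (by positivity), div_le_div_iff₀ (by positivity) ht1]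
    nlinarith [pow_pos ht1 3, mul_nonneg ht (sq_nonneg t)]
  have hB : |4 * logKernelTail t - 2 * log (t + 1) ^ 2 - log 8 - log 8 ^ 2 / 2|
      ≤ 4 * logKernelTail 0 + 2 * log (t + 1) ^ 2 + log 8 + log 8 ^ 2 / 2 := by
    rw [abs_le]; constructor <;> nlinarith
  have hC : |32 * t * (t - 1) / (t + 1) ^ 3| ≤ 32 / (t + 1) := by
    rw [abs_div, abs_of_pos (pow_pos ht1 3), div_le_div_iff₀ (by positivity) ht1]
    rcases abs_cases (32 * t * (t - 1)) with ⟨h, _⟩ | ⟨h, _⟩ <;> rw [h] <;> nlinarith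
  have hD : |8 * (4 * t ^ 3 + t ^ 2 + 6 * t - 1) / (t + 1) ^ 4| ≤ 48 / (t + 1) := by
    rw [abs_div, abs_of_pos (pow_pos ht1 4), div_le_div_iff₀ (by positivity) ht1]
    rcases abs_cases (8 * (4 * t ^ 3 + t ^ 2 + 6 * t - 1)) with ⟨h, _⟩ | ⟨h, _⟩ <;> rw [h] <;>
      nlinarith [pow_pos ht1 3, mul_nonneg ht (sq_nonneg t)]
  calc |radialPrimitive t|
      ≤ 8 / (t + 1) * (4 * logKernelTail 0 + 2 * log (t + 1) ^ 2 + log 8 + log 8 ^ 2 / 2)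
        + 32 / (t + 1) * log (t + 1) + 48 / (t + 1) := by
        refine (abs_add_le _ _).trans (add_le_add ((abs_add_le _ _).trans (add_le_add ?_ ?_)) hD)
        · rw [abs_mul]; exact mul_le_mul hA hB (abs_nonneg _) (by positivity)
        · rw [abs_mul, abs_of_nonneg hL]; exact mul_le_mul_of_nonneg_right hC hL
    _ = _ := by field_simp; ring

lemma tendsto_radialPrimitive_atTop : Tendsto radialPrimitive atTop (𝓝 0) := by
  have hlim := (((tendsto_log_add_one_pow_div_atTop 0).const_mul
    (8 * (4 * logKernelTail 0 + log 8 + log 8 ^ 2 / 2) + 48)).add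
    ((tendsto_log_add_one_pow_div_atTop 1).const_mul 32)).add
    ((tendsto_log_add_one_pow_div_atTop 2).const_mul 16)
  simp only [mul_zero, add_zero] at hlim
  refine squeeze_zero_norm' ?_ hlim
  filter_upwards [eventually_ge_atTop 0] with t ht
  rw [norm_eq_abs]
  convert abs_radialPrimitive_le ht using 1
  field_simp

lemma abs_radialIntegrand_le {t : ℝ} (ht : 0 < t) :
    |radialIntegrand t| ≤
      8 * (20 + 4 * logKernelTail 0 + log 8 + log 8 ^ 2 / 2) * logSqWeight t := by
  obtain ⟨hc0, hc7⟩ := log_eight_mem_Icc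
  have ht1 : 0 < t + 1 := by linarith
  have hL : 0 ≤ log (t + 1) := log_nonneg (by linarith)
  have hI0 := logKernelTail_nonneg ht.le
  have hIK := logKernelTail_le ht.le
  have hq : |(t - 1) / (t + 1)| ≤ 1 := by
    rw [abs_div, abs_of_pos ht1, div_le_one ht1, abs_le]; constructor <;> linarith
  have hr : |(2 * log 8 - 10) / (t + 1)| ≤ 10 := by
    rw [abs_div, abs_of_pos ht1, div_le_iff₀ ht1, abs_le]; constructor <;> nlinarith
  have hX : |4 * logKernelTail t - 2 * log (t + 1) ^ 2 - (1 / 2) * log 8 ^ 2|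
      ≤ 4 * logKernelTail 0 + 2 * log (t + 1) ^ 2 + log 8 ^ 2 / 2 := by
    rw [abs_le]; constructor <;> nlinarith
  have hqX := (abs_mul _ _).trans_le ((mul_le_of_le_one_left (abs_nonneg _) hq).trans hX)
  have hB : |log 8 - 8 * log (t + 1) - (2 * log 8 - 10) / (t + 1)
      - (t - 1) / (t + 1) * (4 * logKernelTail t - 2 * log (t + 1) ^ 2 - (1 / 2) * log 8 ^ 2)|
      ≤ (20 + 4 * logKernelTail 0 + log 8 + log 8 ^ 2 / 2) * (log (t + 1) ^ 2 + 1) := by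
    have := abs_le.1 hr
    have := abs_le.1 hqX
    rw [abs_le]; constructor <;> nlinarith [sq_nonneg (log (t + 1) - 1)]
  have hcoef : 8 * (t - 1) ^ 2 / (t + 1) ^ 4 ≤ 8 / (t + 1) ^ 2 := by
    rw [div_le_div_iff₀ (by positivity) (by positivity)]
    nlinarith [pow_pos ht1 2, mul_pos ht (pow_pos ht1 2)]
  rw [radialIntegrand, abs_mul, abs_of_nonneg (by positivity), logSqWeight]
  calc _ ≤ 8 / (t + 1) ^ 2 *
        ((20 + 4 * logKernelTail 0 + log 8 + log 8 ^ 2 / 2) * (log (t + 1) ^ 2 + 1)) :=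
        mul_le_mul hcoef hB (abs_nonneg _) (by positivity)
    _ = _ := by ring

lemma integrableOn_radialIntegrand : IntegrableOn radialIntegrand (Ioi 0) := by
  have hcont : ContinuousOn radialIntegrand (Ioi 0) := fun t (ht : 0 < t) => by
    have := (hasDerivAt_logKernelTail ht).continuousAt
    apply ContinuousAt.continuousWithinAt
    unfold radialIntegrand
    fun_prop (disch := positivity)
  refine (integrableOn_logSqWeight.const_mul
    (8 * (20 + 4 * logKernelTail 0 + log 8 + log 8 ^ 2 / 2))).mono'
    (hcont.aestronglyMeasurable measurableSet_Ioi) ?_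
  filter_upwards [ae_restrict_mem measurableSet_Ioi] with t ht
  exact abs_radialIntegrand_le ht

lemma integral_radialIntegrand : ∫ t in Ioi 0, radialIntegrand t = 8 := by
  rw [integral_Ioi_of_hasDerivAt_of_tendsto continuousWithinAt_radialPrimitive_zero
    (fun t ht => hasDerivAt_radialPrimitive ht) integrableOn_radialIntegrand
    tendsto_radialPrimitive_atTop, radialPrimitive_zero]
  norm_num

lemma integral_comp_norm_sq_euclideanSpace_fin_two {F : Type*} [NormedAddCommGroup F]
    [NormedSpace ℝ F] (f : ℝ → F) :
    ∫ y : EuclideanSpace ℝ (Fin 2), f (‖y‖ ^ 2) = π • ∫ t in Ioi 0, f t := by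
  have hpolar := integral_fun_norm_addHaar (volume : Measure (EuclideanSpace ℝ (Fin 2)))
    (fun r : ℝ => f (r ^ 2))
  rw [finrank_euclideanSpace_fin, measureReal_def, EuclideanSpace.volume_ball_fin_two] at hpolar
  have hsub := integral_comp_rpow_Ioi_of_pos (g := f) two_pos
  rw [setIntegral_congr_fun measurableSet_Ioi
    (g := fun x : ℝ => (2 : ℝ) • (x ^ (2 - 1) • f (x ^ 2))) fun x (hx : 0 < x) => by
      norm_num [← smul_smul], integral_smul] at hsub
  rw [hpolar, ← hsub, smul_smul, ← Nat.cast_smul_eq_nsmul ℝ, smul_smul]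
  norm_num [pi_nonneg, mul_comm]

lemma vInf_eq_log_eight_sub (y : EuclideanSpace ℝ (Fin 2)) :
    vInf y = log 8 - 2 * log (‖y‖ ^ 2 + 1) := by
  rw [vInf, log_div (by norm_num) (by positivity), log_pow, add_comm]
  push_cast
  ring

lemma integrand_eq_radialIntegrand (y : EuclideanSpace ℝ (Fin 2)) :
    8 * (‖y‖ ^ 2 - 1) ^ 2 / (‖y‖ ^ 2 + 1) ^ 4 * ((1 / 2) * (vInf y) ^ 2 + vInf y - w0Inf y)
      = radialIntegrand (‖y‖ ^ 2) := by
  rw [w0Inf, radialIntegrand, logKernelTail, vInf_eq_log_eight_sub]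
  simp only [logKernel]
  ring

/-- `∫_{ℝ²} (8(|y|²-1)²/(|y|²+1)⁴)·[(1/2)υ_∞² + υ_∞ − ω⁰_∞] dy = 8π`. -/
theorem statement7 :
    (∫ y : EuclideanSpace ℝ (Fin 2),
        8 * (‖y‖ ^ 2 - 1) ^ 2 / (‖y‖ ^ 2 + 1) ^ 4 *
          ((1 / 2) * (vInf y) ^ 2 + vInf y - w0Inf y))
      = 8 * π := by
  simp_rw [integrand_eq_radialIntegrand]
  rw [integral_comp_norm_sq_euclideanSpace_fin_two, integral_radialIntegrand, smul_eq_mul, mul_comm]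
end
end

section
/- Let ξ ∈ Ω̄ for a bounded smooth domain Ω ⊂ ℝ², and for q > 1 define the function g_ε(x) = log(|x−ξ|²/(ε² + |x−ξ|²)) on Ω. Then there is a constant C > 0 independent of ε such that ‖g_ε‖_{L^q(Ω)} ≤ C ε^{2/q} for all small ε > 0. -/
/-!
Substituting `x = ξ + ε • y` turns `|g_ε|^q` into the fixed profile
`|log (|y|² / (1 + |y|²))|^q` and contributes the Jacobian `ε²`, so
`‖g_ε‖_{L^q(ℝ²)}^q = ε² ‖g_1‖_{L^q(ℝ²)}^q`. The profile is integrable on the plane: in polar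
coordinates its weighted radial density `r |log (r² / (1 + r²))|^q` is bounded near `0` and
is `O(r^{1-2q})` at infinity, where `2q > 2`. Enlarging `Ω` to `ℝ²` gives the bound.
-/

noncomputable section
open MeasureTheory Real Set

lemma Real.log_one_add_le_rpow_div {t a : ℝ} (ht : 0 ≤ t) (ha : 0 < a) (ha1 : a ≤ 1) :
    log (1 + t) ≤ t ^ a / a := by
  have h1t : 0 < 1 + t := by linarith
  rw [le_div_iff₀' ha, ← log_rpow h1t]
  calc log ((1 + t) ^ a) ≤ (1 + t) ^ a - 1 := log_le_sub_one_of_pos (rpow_pos_of_pos h1t a)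
    _ ≤ t ^ a := by
      have := rpow_add_le_add_rpow zero_le_one ht ha.le ha1
      rw [one_rpow] at this
      linarith

def logQuotientPow (q r : ℝ) : ℝ := |log (r ^ 2 / (1 + r ^ 2))| ^ q

lemma logQuotientPow_nonneg (q r : ℝ) : 0 ≤ logQuotientPow q r :=
  rpow_nonneg (abs_nonneg _) q

lemma measurable_logQuotientPow (q : ℝ) : Measurable (logQuotientPow q) := by
  unfold logQuotientPow
  fun_prop

lemma abs_log_sq_div_one_add_sq {r : ℝ} (hr : r ≠ 0) :
    |log (r ^ 2 / (1 + r ^ 2))| = log (1 + (r ^ 2)⁻¹) := by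
  have hinv : r ^ 2 / (1 + r ^ 2) = (1 + (r ^ 2)⁻¹)⁻¹ := by field_simp; ring
  rw [hinv, log_inv, abs_neg, abs_of_nonneg (log_nonneg (by simp; positivity))]

lemma logQuotientPow_le_rpow {q r : ℝ} (hq : 0 ≤ q) (hr : 0 < r) :
    logQuotientPow q r ≤ r ^ (-2 * q) := by
  have hlog : |log (r ^ 2 / (1 + r ^ 2))| ≤ (r ^ 2)⁻¹ := by
    rw [abs_log_sq_div_one_add_sq hr.ne']
    simpa using log_one_add_le_rpow_div (t := (r ^ 2)⁻¹) (by positivity) one_pos le_rfl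
  calc logQuotientPow q r ≤ ((r ^ 2)⁻¹) ^ q := rpow_le_rpow (abs_nonneg _) hlog hq
    _ = r ^ (-2 * q) := by
      rw [← rpow_natCast, ← rpow_neg_one, ← rpow_mul hr.le, ← rpow_mul hr.le]
      norm_num

lemma mul_logQuotientPow_le {q r : ℝ} (hq : 1 ≤ 2 * q) (hr : 0 < r) :
    r * logQuotientPow q r ≤ (2 * q) ^ q := by
  have hq0 : 0 < q := by linarith
  have hlog : |log (r ^ 2 / (1 + r ^ 2))| ≤ 2 * q * ((r ^ 2)⁻¹) ^ (1 / (2 * q)) := by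
    rw [abs_log_sq_div_one_add_sq hr.ne']
    have := log_one_add_le_rpow_div (t := (r ^ 2)⁻¹) (by positivity)
      (by positivity : 0 < 1 / (2 * q)) ((div_le_one (by positivity)).2 hq)
    rwa [div_div_eq_mul_div, div_one, mul_comm] at this
  calc r * logQuotientPow q r ≤ r * (2 * q * ((r ^ 2)⁻¹) ^ (1 / (2 * q))) ^ q := by
        gcongr
        exact rpow_le_rpow (abs_nonneg _) hlog hq0.le
    _ = (2 * q) ^ q * (r * r ^ (-1 : ℝ)) := by
      rw [mul_rpow (by positivity) (by positivity), ← rpow_mul (by positivity),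
        ← rpow_natCast, ← rpow_neg_one, ← rpow_mul hr.le, ← rpow_mul hr.le]
      field_simp
      norm_num
    _ = (2 * q) ^ q := by rw [rpow_neg_one, mul_inv_cancel₀ hr.ne', mul_one]

lemma integrableOn_mul_logQuotientPow {q : ℝ} (hq : 1 < q) :
    IntegrableOn (fun r : ℝ => r * logQuotientPow q r) (Ioi 0) := by
  have hmeas : AEStronglyMeasurable (fun r : ℝ => r * logQuotientPow q r) :=
    (measurable_id.mul (measurable_logQuotientPow q)).aestronglyMeasurable
  rw [← Ioc_union_Ioi_eq_Ioi zero_le_one]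
  refine IntegrableOn.union ?_ ?_
  · refine IntegrableOn.of_bound measure_Ioc_lt_top hmeas.restrict ((2 * q) ^ q) ?_
    refine (ae_restrict_iff' measurableSet_Ioc).2 (ae_of_all _ fun r hr => ?_)
    rw [norm_of_nonneg (mul_nonneg hr.1.le (logQuotientPow_nonneg q r))]
    exact mul_logQuotientPow_le (by linarith) hr.1
  · refine (integrableOn_Ioi_rpow_of_lt (by linarith : 1 - 2 * q < -1) one_pos).mono'
      hmeas.restrict ?_
    refine (ae_restrict_iff' measurableSet_Ioi).2 (ae_of_all _ fun r (hr : 1 < r) => ?_)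
    have hr0 : 0 < r := by linarith
    rw [norm_of_nonneg (mul_nonneg hr0.le (logQuotientPow_nonneg q r)), sub_eq_add_neg,
      rpow_add hr0, rpow_one, neg_mul_eq_neg_mul]
    exact mul_le_mul_of_nonneg_left (logQuotientPow_le_rpow (by linarith) hr0) hr0.le

lemma integrable_logQuotientPow_norm {q : ℝ} (hq : 1 < q) :
    Integrable (fun y : EuclideanSpace ℝ (Fin 2) => logQuotientPow q ‖y‖) := by
  rw [integrable_fun_norm_addHaar volume]
  simpa [finrank_euclideanSpace_fin] using integrableOn_mul_logQuotientPow hq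

lemma logQuotientPow_norm_inv_smul {E : Type*} [NormedAddCommGroup E] [NormedSpace ℝ E]
    (q : ℝ) (v : E) {ε : ℝ} (hε : 0 < ε) :
    logQuotientPow q ‖ε⁻¹ • v‖ = |log (‖v‖ ^ 2 / (ε ^ 2 + ‖v‖ ^ 2))| ^ q := by
  rw [logQuotientPow, norm_smul, norm_of_nonneg (inv_nonneg.2 hε.le)]
  congr 3
  field_simp

theorem integral_comp_inv_smul_sub {E F : Type*} [NormedAddCommGroup E] [NormedSpace ℝ E]
    [MeasurableSpace E] [BorelSpace E] [FiniteDimensional ℝ E] [NormedAddCommGroup F]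
    [NormedSpace ℝ F] (μ : Measure E) [μ.IsAddHaarMeasure] (f : E → F) (ξ : E) {ε : ℝ}
    (hε : 0 ≤ ε) :
    ∫ x, f (ε⁻¹ • (x - ξ)) ∂μ = ε ^ Module.finrank ℝ E • ∫ x, f x ∂μ := by
  rw [integral_sub_right_eq_self (fun x => f (ε⁻¹ • x)) ξ,
    Measure.integral_comp_inv_smul_of_nonneg μ f hε]

theorem statement14_general (Ω : Set (EuclideanSpace ℝ (Fin 2)))
    (ξ : EuclideanSpace ℝ (Fin 2))
    (q : ℝ) (hq : 1 < q) :
    ∃ C > (0:ℝ), ∃ ε₀ > (0:ℝ), ∀ ε : ℝ, 0 < ε → ε < ε₀ →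
      (∫ x in Ω,
          |Real.log (‖x - ξ‖ ^ 2 / (ε ^ 2 + ‖x - ξ‖ ^ 2))| ^ q) ^ (1 / q)
        ≤ C * ε ^ (2 / q) := by
  set I := ∫ y : EuclideanSpace ℝ (Fin 2), logQuotientPow q ‖y‖
  have hI : 0 ≤ I := integral_nonneg fun y => logQuotientPow_nonneg q _
  refine ⟨I ^ (1 / q) + 1, by positivity, 1, one_pos, fun ε hε _ => ?_⟩
  simp_rw [← logQuotientPow_norm_inv_smul q _ hε]
  have hint : Integrable fun x : EuclideanSpace ℝ (Fin 2) => logQuotientPow q ‖ε⁻¹ • (x - ξ)‖ :=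
    ((integrable_logQuotientPow_norm hq).comp_smul (inv_ne_zero hε.ne')).comp_sub_right ξ
  have hbound : ∫ x in Ω, logQuotientPow q ‖ε⁻¹ • (x - ξ)‖ ≤ ε ^ 2 * I :=
    calc ∫ x in Ω, logQuotientPow q ‖ε⁻¹ • (x - ξ)‖
        ≤ ∫ x, logQuotientPow q ‖ε⁻¹ • (x - ξ)‖ :=
          setIntegral_le_integral hint (ae_of_all _ fun x => logQuotientPow_nonneg q _)
      _ = ε ^ 2 * I := by
          rw [integral_comp_inv_smul_sub volume (fun y => logQuotientPow q ‖y‖) ξ hε.le,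
            finrank_euclideanSpace_fin, smul_eq_mul]
  calc (∫ x in Ω, logQuotientPow q ‖ε⁻¹ • (x - ξ)‖) ^ (1 / q)
      ≤ (ε ^ 2 * I) ^ (1 / q) :=
        rpow_le_rpow (setIntegral_nonneg_of_ae (ae_of_all _ fun x => logQuotientPow_nonneg q _))
          hbound (by positivity)
    _ = I ^ (1 / q) * ε ^ (2 / q) := by
        rw [mul_rpow (by positivity) hI, mul_comm, ← rpow_natCast, ← rpow_mul hε.le]
        norm_num [div_eq_mul_inv]
    _ ≤ (I ^ (1 / q) + 1) * ε ^ (2 / q) := by gcongr; linarith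

/-- For `ξ ∈ Ω̄` and `q > 1`, the function
`g_ε(x) = log(|x−ξ|²/(ε² + |x−ξ|²))` satisfies `‖g_ε‖_{L^q(Ω)} ≤ C ε^{2/q}`
for all small `ε > 0`, with `C` independent of `ε`. -/
theorem statement14 (Ω : Set (EuclideanSpace ℝ (Fin 2)))
    (hΩ : IsOpen Ω) (hΩb : Bornology.IsBounded Ω)
    (ξ : EuclideanSpace ℝ (Fin 2)) (hξ : ξ ∈ closure Ω)
    (q : ℝ) (hq : 1 < q) :
    ∃ C > (0:ℝ), ∃ ε₀ > (0:ℝ), ∀ ε : ℝ, 0 < ε → ε < ε₀ →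
      (∫ x in Ω,
          |Real.log (‖x - ξ‖ ^ 2 / (ε ^ 2 + ‖x - ξ‖ ^ 2))| ^ q) ^ (1 / q)
        ≤ C * ε ^ (2 / q) :=
  statement14_general Ω ξ q hq
end
end
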